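/- arXiv:1809.06266 — 10 statements merged into one kernel-verified Lean document; each statement's English description precedes it below -/
import Mathlib

section
/- Let r, r' be nonnegative vectors in R^n and k ∈ [1,n] such that r'_i ≥ r'_j whenever i ≤ k < j. Suppose δ_i = r_i - r'_i ≥ 0 for i ≤ k and δ_j = r'_j - r_j ≥ 0 for j > k. Let D = min_{i≤k} r_i - max_{j>k} r_j and Δ = Σ_{i≤k} δ_i. If Δ ≥ Σ_{j>k} δ_j, then ‖r'‖₂² ≤ ‖r‖₂² - D·Δ. -/
/-- Lemma (DuanGM16): balanced-flow norm decrease inequality. -/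
theorem stmt_0 (n : ℕ) (r r' : Fin n → ℝ)
    (hr : ∀ i, 0 ≤ r i) (hr' : ∀ i, 0 ≤ r' i)
    (k : ℕ) (hk1 : 1 ≤ k) (hk2 : k ≤ n)
    (hsorted : ∀ i j : Fin n, i.val < k → k ≤ j.val → r' j ≤ r' i)
    (hδ1 : ∀ i : Fin n, i.val < k → 0 ≤ r i - r' i)
    (hδ2 : ∀ j : Fin n, k ≤ j.val → 0 ≤ r' j - r j)
    (D : ℝ)
    (hD : D = sInf {x : ℝ | ∃ i j : Fin n, i.val < k ∧ k ≤ j.val ∧ x = r i - r j})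
    (Δ : ℝ)
    (hΔ : Δ = ∑ i ∈ Finset.univ.filter (fun i : Fin n => i.val < k), (r i - r' i))
    (hbal : ∑ j ∈ Finset.univ.filter (fun j : Fin n => k ≤ j.val), (r' j - r j) ≤ Δ) :
    ∑ i, (r' i) ^ 2 ≤ ∑ i, (r i) ^ 2 - D * Δ := by
  set A := Finset.univ.filter (fun i : Fin n => i.val < k) with hA
  set B := Finset.univ.filter (fun j : Fin n => k ≤ j.val) with hB
  have hsplit : ∀ f : Fin n → ℝ, ∑ i, f i = ∑ i ∈ A, f i + ∑ i ∈ B, f i := by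
    intro f
    rw [hA, hB,
      ← Finset.sum_filter_add_sum_filter_not Finset.univ (fun i : Fin n => i.val < k) f]
    congr 1
    apply Finset.sum_congr _ (fun _ _ => rfl)
    ext j; simp [not_lt]
  have hΔ0 : 0 ≤ Δ := by
    rw [hΔ]
    exact Finset.sum_nonneg (fun i hi => hδ1 i (by simpa [hA] using hi))
  rcases eq_or_lt_of_le hk2 with hkn | hkn
  · -- k = n : the pair set is empty, D = 0
    have hBe : ∀ j : Fin n, ¬ (k ≤ j.val) := fun j h => by have := j.isLt; omega
    have hD0 : D = 0 := by
      rw [hD]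
      convert Real.sInf_empty
      ext x; simp only [Set.mem_empty_iff_false, iff_false]
      rintro ⟨i, j, hi, hj, _⟩; exact hBe j hj
    rw [hD0, zero_mul, sub_zero]
    apply Finset.sum_le_sum
    intro i _
    have h1 := hδ1 i (by have := i.isLt; omega)
    exact pow_le_pow_left₀ (hr' i) (by linarith) 2
  · -- k < n : B nonempty
    have hBne : B.Nonempty := ⟨⟨k, hkn⟩, by simp [hB]⟩
    have hbdd : BddBelow {x : ℝ | ∃ i j : Fin n, i.val < k ∧ k ≤ j.val ∧ x = r i - r j} := by
      apply Set.Finite.bddBelow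
      apply Set.Finite.subset (Set.finite_range (fun p : Fin n × Fin n => r p.1 - r p.2))
      rintro x ⟨i, j, _, _, rfl⟩; exact ⟨(i, j), rfl⟩
    have hDle : ∀ i j : Fin n, i.val < k → k ≤ j.val → D ≤ r i - r j := by
      intro i j hi hj
      rw [hD]; exact csInf_le hbdd ⟨i, j, hi, hj, rfl⟩
    obtain ⟨jm, hjmB, hjm⟩ := B.exists_max_image (fun j => r j + r' j) hBne
    set M := r jm + r' jm with hMdef
    have hjmk : k ≤ jm.val := by simpa [hB] using hjmB
    have hM0 : 0 ≤ M := add_nonneg (hr jm) (hr' jm)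
    have hAlow : ∀ i ∈ A, (D + M) * (r i - r' i) ≤ (r i - r' i) * (r i + r' i) := by
      intro i hi
      have hik : i.val < k := by simpa [hA] using hi
      have h1 := hδ1 i hik
      have h2 := hDle i jm hik hjmk
      have h3 := hsorted i jm hik hjmk
      nlinarith
    have hBhigh : ∀ j ∈ B, (r' j - r j) * (r j + r' j) ≤ M * (r' j - r j) := by
      intro j hj
      have hjk : k ≤ j.val := by simpa [hB] using hj
      have h1 := hδ2 j hjk
      have h2 := hjm j hj
      nlinarith
    have e2 : (D + M) * Δ ≤ ∑ i ∈ A, (r i - r' i) * (r i + r' i) := by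
      have e1 : ∑ i ∈ A, (D + M) * (r i - r' i) = (D + M) * Δ := by
        rw [hΔ, Finset.mul_sum]
      rw [← e1]; exact Finset.sum_le_sum hAlow
    have e3 : ∑ j ∈ B, (r' j - r j) * (r j + r' j) ≤ M * Δ := by
      calc ∑ j ∈ B, (r' j - r j) * (r j + r' j) ≤ ∑ j ∈ B, M * (r' j - r j) :=
            Finset.sum_le_sum hBhigh
        _ = M * ∑ j ∈ B, (r' j - r j) := by rw [Finset.mul_sum]
        _ ≤ M * Δ := mul_le_mul_of_nonneg_left hbal hM0
    have hs1 := hsplit (fun i => (r i) ^ 2)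
    have hs2 := hsplit (fun i => (r' i) ^ 2)
    have ea : ∑ i ∈ A, (r i - r' i) * (r i + r' i)
        = ∑ i ∈ A, (r i) ^ 2 - ∑ i ∈ A, (r' i) ^ 2 := by
      rw [← Finset.sum_sub_distrib]
      exact Finset.sum_congr rfl (fun i _ => by ring)
    have eb : ∑ j ∈ B, (r' j - r j) * (r j + r' j)
        = ∑ j ∈ B, (r' j) ^ 2 - ∑ j ∈ B, (r j) ^ 2 := by
      rw [← Finset.sum_sub_distrib]
      exact Finset.sum_congr rfl (fun j _ => by ring)
    rw [ea] at e2
    rw [eb] at e3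
    nlinarith
end

section
/- Let A be an m×n real matrix such that every row of A has at most one strictly positive entry and at most one strictly negative entry (an M2VPI matrix), and let b ∈ R^m. If x and x' are two feasible solutions to A x ≤ b, then the componentwise maximum x'' with x''_i = max(x_i, x'_i) is also feasible: A x'' ≤ b. -/
lemma aux_sum_max (n : ℕ) (r x x' : Fin n → ℝ)
    (h : ∀ j, 0 < r j → x' j ≤ x j) :
    ∑ j, r j * max (x j) (x' j) ≤ ∑ j, r j * x j := by
  apply Finset.sum_le_sum
  intro j _
  rcases lt_or_ge 0 (r j) with hr | hr
  · rw [max_eq_left (h j hr)]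
  · exact mul_le_mul_of_nonpos_left (le_max_left _ _) hr

/-- For an M2VPI matrix `A` (each row has at most one strictly positive and at most one
strictly negative entry), the feasible region of `A x ≤ b` is closed under componentwise
maxima. -/
theorem stmt_4 (m n : ℕ) (A : Matrix (Fin m) (Fin n) ℝ) (b : Fin m → ℝ)
    (hpos : ∀ i, ∀ j j' : Fin n, 0 < A i j → 0 < A i j' → j = j')
    (hneg : ∀ i, ∀ j j' : Fin n, A i j < 0 → A i j' < 0 → j = j')
    (x x' : Fin n → ℝ)
    (hx : ∀ i, A.mulVec x i ≤ b i) (hx' : ∀ i, A.mulVec x' i ≤ b i) :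
    ∀ i, A.mulVec (fun j => max (x j) (x' j)) i ≤ b i := by
  intro i
  have hx := hx i
  have hx' := hx' i
  simp only [Matrix.mulVec, dotProduct] at hx hx' ⊢
  by_cases hc : ∃ p, 0 < A i p ∧ x p < x' p
  · obtain ⟨p, hp, hlt⟩ := hc
    have h : ∀ j, 0 < A i j → x j ≤ x' j := by
      intro j hj
      rw [hpos i j p hj hp]
      exact hlt.le
    calc ∑ j, A i j * max (x j) (x' j)
        = ∑ j, A i j * max (x' j) (x j) := by simp [max_comm]
      _ ≤ ∑ j, A i j * x' j := aux_sum_max n (A i) x' x h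
      _ ≤ b i := hx'
  · push_neg at hc
    have h : ∀ j, 0 < A i j → x' j ≤ x j := fun j hj => hc j hj
    exact le_trans (aux_sum_max n (A i) x x' h) hx
end

section
/- Let A be an m×n real matrix whose transpose is pre-Leontief, i.e., every row of A contains at most one strictly positive entry, and let b ∈ R^m. If x, x' satisfy A x ≤ b and A x' ≤ b, then the componentwise maximum x'' (x''_i = max(x_i, x'_i)) also satisfies A x'' ≤ b. -/
/-- If the transpose of `A` is pre-Leontief, i.e., every row of `A` has at most one
strictly positive entry, then the feasible region of `A x ≤ b` is closed under
componentwise maxima. -/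
theorem stmt_5 (m n : ℕ) (A : Matrix (Fin m) (Fin n) ℝ) (b : Fin m → ℝ)
    (hpos : ∀ i, ∀ j j' : Fin n, 0 < A i j → 0 < A i j' → j = j')
    (x x' : Fin n → ℝ)
    (hx : ∀ i, A.mulVec x i ≤ b i) (hx' : ∀ i, A.mulVec x' i ≤ b i) :
    ∀ i, A.mulVec (fun j => max (x j) (x' j)) i ≤ b i := by
  intro i
  by_cases h : ∃ j0, 0 < A i j0
  · obtain ⟨j0, hj0⟩ := h
    rcases le_total (x' j0) (x j0) with hc | hc
    · refine le_trans ?_ (hx i)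
      unfold Matrix.mulVec dotProduct
      refine Finset.sum_le_sum fun j _ => ?_
      dsimp only
      by_cases hj : j = j0
      · subst hj
        rw [max_eq_left hc]
      · have hA : A i j ≤ 0 := by
          by_contra hA
          exact hj (hpos i j j0 (lt_of_not_ge hA) hj0)
        exact mul_le_mul_of_nonpos_left (le_max_left _ _) hA
    · refine le_trans ?_ (hx' i)
      unfold Matrix.mulVec dotProduct
      refine Finset.sum_le_sum fun j _ => ?_
      dsimp only
      by_cases hj : j = j0
      · subst hj
        rw [max_eq_right hc]
      · have hA : A i j ≤ 0 := by
          by_contra hA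
          exact hj (hpos i j j0 (lt_of_not_ge hA) hj0)
        exact mul_le_mul_of_nonpos_left (le_max_right _ _) hA
  · push_neg at h
    refine le_trans ?_ (hx i)
    unfold Matrix.mulVec dotProduct
    refine Finset.sum_le_sum fun j _ => ?_
    dsimp only
    exact mul_le_mul_of_nonpos_left (le_max_left _ _) (h j)
end

section
/- Let A be an m×n real matrix with at most one positive entry per row, b ∈ R^m, and suppose the feasible region P = {x : A x ≤ b} is nonempty and the linear objective Σ_i x_i is bounded above on P. Then P has a pointwise maximal element: there exists x* ∈ P with x ≤ x* componentwise for every x ∈ P. -/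
/-- If every row of `A` has at most one strictly positive entry, the feasible region
`P = {x : A x ≤ b}` is nonempty, and `Σ_i x_i` is bounded above on `P`, then `P` has a
pointwise maximal element. -/
theorem stmt_6 (m n : ℕ) (A : Matrix (Fin m) (Fin n) ℝ) (b : Fin m → ℝ)
    (hpos : ∀ i, ∀ j j' : Fin n, 0 < A i j → 0 < A i j' → j = j')
    (hne : ∃ x : Fin n → ℝ, ∀ i, A.mulVec x i ≤ b i)
    (hbdd : ∃ c : ℝ, ∀ x : Fin n → ℝ, (∀ i, A.mulVec x i ≤ b i) → (∑ j, x j) ≤ c) :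
    ∃ xstar : Fin n → ℝ, (∀ i, A.mulVec xstar i ≤ b i) ∧
      ∀ x : Fin n → ℝ, (∀ i, A.mulVec x i ≤ b i) → ∀ j, x j ≤ xstar j := by
  obtain ⟨x0, hx0⟩ := hne
  obtain ⟨c, hc⟩ := hbdd
  set S : Set (Fin n → ℝ) := {x | ∀ i, A.mulVec x i ≤ b i} with hSdef
  have hx0S : x0 ∈ S := hx0
  -- S is closed under pointwise max
  have sup_mem : ∀ x ∈ S, ∀ y ∈ S, x ⊔ y ∈ S := by
    intro x hx y hy i
    by_cases h : ∃ j, 0 < A i j ∧ x j < y j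
    · obtain ⟨j0, hj0, hxy⟩ := h
      calc A.mulVec (x ⊔ y) i ≤ A.mulVec y i := by
              simp only [Matrix.mulVec, dotProduct]
              apply Finset.sum_le_sum
              intro j _
              rcases lt_or_ge 0 (A i j) with hA | hA
              · have hj : j = j0 := hpos i j j0 hA hj0
                subst hj
                simp [Pi.sup_apply, max_eq_right hxy.le]
              · exact mul_le_mul_of_nonpos_left le_sup_right hA
        _ ≤ b i := hy i
    · push_neg at h
      calc A.mulVec (x ⊔ y) i ≤ A.mulVec x i := by
              simp only [Matrix.mulVec, dotProduct]
              apply Finset.sum_le_sum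
              intro j _
              rcases lt_or_ge 0 (A i j) with hA | hA
              · simp [Pi.sup_apply, max_eq_left (h j hA)]
              · exact mul_le_mul_of_nonpos_left le_sup_left hA
        _ ≤ b i := hx i
  -- each coordinate is bounded above on S
  have coordbdd : ∀ j : Fin n, ∀ x ∈ S, x j ≤ c - ∑ i ∈ Finset.univ.erase j, x0 i := by
    intro j x hx
    have hmem : x ⊔ x0 ∈ S := sup_mem x hx x0 hx0S
    have hsum : ∑ i, (x ⊔ x0) i ≤ c := hc _ hmem
    have h1 : (x ⊔ x0) j + ∑ i ∈ Finset.univ.erase j, (x ⊔ x0) i = ∑ i, (x ⊔ x0) i :=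
      Finset.add_sum_erase _ _ (Finset.mem_univ j)
    have h2 : ∑ i ∈ Finset.univ.erase j, x0 i ≤ ∑ i ∈ Finset.univ.erase j, (x ⊔ x0) i :=
      Finset.sum_le_sum fun i _ => le_sup_right
    have h3 : x j ≤ (x ⊔ x0) j := le_sup_left
    linarith
  rcases Nat.eq_zero_or_pos n with hn | hn
  · subst hn
    exact ⟨x0, hx0, fun x hx j => j.elim0⟩
  haveI : Nonempty (Fin n) := Fin.pos_iff_nonempty.mp hn
  -- the candidate maximal element
  set s : Fin n → ℝ := fun j => sSup ((fun x => x j) '' S) with hsdef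
  have hTne : ∀ j : Fin n, ((fun x => x j) '' S).Nonempty := fun j => ⟨x0 j, x0, hx0S, rfl⟩
  have hTbdd : ∀ j : Fin n, BddAbove ((fun x => x j) '' S) := by
    intro j
    refine ⟨c - ∑ i ∈ Finset.univ.erase j, x0 i, ?_⟩
    rintro _ ⟨x, hx, rfl⟩
    exact coordbdd j x hx
  have hle_s : ∀ x ∈ S, ∀ j, x j ≤ s j := fun x hx j =>
    le_csSup (hTbdd j) ⟨x, hx, rfl⟩
  refine ⟨s, ?_, fun x hx j => hle_s x hx j⟩
  -- feasibility of s, via an ε-argument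
  intro i
  apply le_of_forall_pos_le_add
  intro ε hε
  set C : ℝ := ∑ j, |A i j| with hCdef
  have hC0 : 0 ≤ C := Finset.sum_nonneg fun j _ => abs_nonneg _
  set δ : ℝ := ε / (C + 1) with hδdef
  have hδ0 : 0 < δ := div_pos hε (by linarith)
  -- choose near-witnesses for each coordinate
  have hw : ∀ j : Fin n, ∃ w ∈ S, s j - δ < w j := by
    intro j
    obtain ⟨a, ⟨w, hwS, rfl⟩, ha⟩ :=
      exists_lt_of_lt_csSup (hTne j) (by linarith [hle_s x0 hx0S j] : s j - δ < s j)
    exact ⟨w, hwS, ha⟩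
  choose w hwS hwlt using hw
  set y : Fin n → ℝ := Finset.univ.sup' Finset.univ_nonempty w with hydef
  have hyS : y ∈ S :=
    Finset.sup'_induction _ _ (fun a ha b hb => sup_mem a ha b hb) (fun j _ => hwS j)
  have hylb : ∀ j, s j - δ ≤ y j := by
    intro j
    have : w j ≤ y := Finset.le_sup' w (Finset.mem_univ j)
    exact (hwlt j).le.trans (this j)
  have hyub : ∀ j, y j ≤ s j := hle_s y hyS
  have key : A.mulVec s i ≤ A.mulVec y i + C * δ := by
    simp only [Matrix.mulVec, dotProduct, hCdef]
    rw [Finset.sum_mul, ← Finset.sum_add_distrib]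
    apply Finset.sum_le_sum
    intro j _
    have h1 : 0 ≤ s j - y j := by linarith [hyub j]
    have h2 : s j - y j ≤ δ := by linarith [hylb j]
    have h3 : A i j * (s j - y j) ≤ |A i j| * (s j - y j) :=
      mul_le_mul_of_nonneg_right (le_abs_self _) h1
    have h4 : |A i j| * (s j - y j) ≤ |A i j| * δ :=
      mul_le_mul_of_nonneg_left h2 (abs_nonneg _)
    nlinarith
  have hCδ : C * δ ≤ ε := by
    have h1 : (C + 1) * δ = ε := by
      rw [hδdef]; field_simp
    nlinarith
  calc A.mulVec s i ≤ A.mulVec y i + C * δ := key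
    _ ≤ b i + ε := add_le_add (hyS i) hCδ
end

section
/- Let T be an ℓ×t real matrix with all off-diagonal entries nonpositive (entries T_{ij} with i ≠ j, where diagonal means positions (i,i) for i ≤ min(ℓ,t)) and all column sums nonnegative. Then Gaussian elimination produces a factorization T' = Y·T where Y ∈ R^{ℓ×ℓ} has all entries nonnegative, T' is upper triangular with diagonal entries equal to 0 or 1, and all off-diagonal entries of T' are nonpositive. Furthermore, if T_{ik} < 0 for some k ∈ [t] and i ∈ [k+1, ℓ], then T'_{kk} = 1. -/
/-!
Each elimination step is left multiplication by an entrywise nonnegative matrix, because the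
pivot is nonnegative and the entries below it are nonpositive: the part of the pivot column from
the pivot row down has nonnegative sum. The step keeps the off-diagonal entries nonpositive, and
the partial column sums of the rows still to be processed stay nonnegative since, by the same
column-sum bound, those rows receive in total at most one copy of the (nonpositive) pivot row.
A zero pivot forces the column below it to vanish. Row operations only decrease the entries below
the diagonal in unprocessed columns, so `T i k < 0` with `i > k` leaves a negative entry below the
`k`-th pivot, which is therefore positive and normalized to `1`.
-/

open Finset Matrix

variable {l t : ℕ}

def OffDiagNonpos (S : Matrix (Fin l) (Fin t) ℝ) : Prop :=
  ∀ (i : Fin l) (j : Fin t), (i : ℕ) ≠ j → S i j ≤ 0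

noncomputable section Elimination

variable (S : Matrix (Fin l) (Fin t) ℝ) (r : Fin l) (c : Fin t)

def pivotMultiplier (i : Fin l) : ℝ :=
  if i = r then (S r c)⁻¹ - 1 else if r < i then -(S i c / S r c) else 0

/-- For a nonzero pivot,
`eliminationMatrix S r c * S = S + vecMulVec (pivotMultiplier S r c) (S r)`: row `r` is divided by
the pivot and `S i c / S r c` times row `r` is subtracted from each row `i > r`. -/
def eliminationMatrix : Matrix (Fin l) (Fin l) ℝ :=
  if S r c = 0 then 1 else 1 + vecMulVec (pivotMultiplier S r c) (Pi.single r 1)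

variable {S r c}

theorem eliminationMatrix_of_eq_zero (hp : S r c = 0) : eliminationMatrix S r c = 1 :=
  if_pos hp

theorem eliminationMatrix_mul_apply (hp : S r c ≠ 0) (i : Fin l) (j : Fin t) :
    (eliminationMatrix S r c * S) i j = S i j + pivotMultiplier S r c i * S r j := by
  rw [eliminationMatrix, if_neg hp, Matrix.add_mul, Matrix.one_mul, vecMulVec_mul,
    single_one_vecMul]
  rfl

theorem eliminationMatrix_mul_apply_of_lt {i : Fin l} (hi : i < r) (j : Fin t) :
    (eliminationMatrix S r c * S) i j = S i j := by
  rcases eq_or_ne (S r c) 0 with hp | hp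
  · rw [eliminationMatrix_of_eq_zero hp, Matrix.one_mul]
  · rw [eliminationMatrix_mul_apply hp, pivotMultiplier, if_neg hi.ne, if_neg hi.not_gt,
      zero_mul, add_zero]

theorem eliminationMatrix_mul_apply_self_left (hp : S r c ≠ 0) (j : Fin t) :
    (eliminationMatrix S r c * S) r j = S r j / S r c := by
  rw [eliminationMatrix_mul_apply hp, pivotMultiplier, if_pos rfl]
  ring

theorem eliminationMatrix_mul_apply_of_gt (hp : S r c ≠ 0) {i : Fin l} (hi : r < i) (j : Fin t) :
    (eliminationMatrix S r c * S) i j = S i j - S i c / S r c * S r j := by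
  rw [eliminationMatrix_mul_apply hp, pivotMultiplier, if_neg hi.ne', if_pos hi]
  ring

theorem eliminationMatrix_mul_apply_pivot_of_ne_zero (hp : S r c ≠ 0) :
    (eliminationMatrix S r c * S) r c = 1 := by
  rw [eliminationMatrix_mul_apply_self_left hp, div_self hp]

theorem eliminationMatrix_mul_apply_pivot :
    (eliminationMatrix S r c * S) r c = 0 ∨ (eliminationMatrix S r c * S) r c = 1 := by
  rcases eq_or_ne (S r c) 0 with hp | hp
  · rw [eliminationMatrix_of_eq_zero hp, Matrix.one_mul]
    exact Or.inl hp
  · exact Or.inr (eliminationMatrix_mul_apply_pivot_of_ne_zero hp)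

theorem eliminationMatrix_mul_apply_eq_zero {i : Fin l} {j : Fin t} (hrj : S r j = 0)
    (hij : S i j = 0) : (eliminationMatrix S r c * S) i j = 0 := by
  rcases eq_or_ne (S r c) 0 with hp | hp
  · rwa [eliminationMatrix_of_eq_zero hp, Matrix.one_mul]
  · rw [eliminationMatrix_mul_apply hp, hrj, hij, mul_zero, add_zero]

section ZMatrix

variable (hS : OffDiagNonpos S) (hrc : (r : ℕ) = c)
include hS hrc

theorem OffDiagNonpos.apply_of_lt_pivot {i : Fin l} (hi : r < i) : S i c ≤ 0 :=
  hS i c (by rw [← hrc]; exact (Fin.lt_def.mp hi).ne')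

theorem OffDiagNonpos.apply_pivot_row {j : Fin t} (hj : j ≠ c) : S r j ≤ 0 :=
  hS r j (by rw [hrc]; exact fun h => hj (Fin.ext h).symm)

theorem eliminationMatrix_nonneg (hp : 0 ≤ S r c) (i j : Fin l) :
    0 ≤ eliminationMatrix S r c i j := by
  rcases hp.eq_or_lt with hp | hp
  · rw [eliminationMatrix_of_eq_zero hp.symm]
    exact zero_le_one_elem i j
  · rw [eliminationMatrix, if_neg hp.ne', Matrix.add_apply, vecMulVec_apply]
    rcases eq_or_ne j r with rfl | hj
    · rw [Pi.single_eq_same, mul_one, pivotMultiplier]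
      rcases eq_or_ne i j with rfl | hij
      · rw [if_pos rfl, one_apply_eq, add_sub_cancel]
        positivity
      · rw [if_neg hij, one_apply_ne hij, zero_add]
        split_ifs with hji
        · exact neg_nonneg.mpr
            (div_nonpos_of_nonpos_of_nonneg (hS.apply_of_lt_pivot hrc hji) hp.le)
        · exact le_rfl
    · rw [Pi.single_eq_of_ne hj, mul_zero, add_zero]
      exact zero_le_one_elem i j

theorem sum_Ioi_apply_pivot_col_nonpos : ∑ i ∈ Ioi r, S i c ≤ 0 :=
  sum_nonpos fun _ hi => hS.apply_of_lt_pivot hrc (mem_Ioi.mp hi)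

variable (hsum : ∀ j, 0 ≤ ∑ i ∈ Ici r, S i j)
include hsum

theorem pivot_nonneg : 0 ≤ S r c := by
  have := hsum c
  rw [← add_sum_Ioi_eq_sum_Ici] at this
  linarith [sum_Ioi_apply_pivot_col_nonpos hS hrc]

theorem apply_pivot_col_eq_zero_of_pivot_eq_zero (hp : S r c = 0) {i : Fin l} (hi : r < i) :
    S i c = 0 := by
  have hsum0 : ∑ i ∈ Ioi r, S i c = 0 := by
    have := hsum c
    rw [← add_sum_Ioi_eq_sum_Ici, hp, zero_add] at this
    exact le_antisymm (sum_Ioi_apply_pivot_col_nonpos hS hrc) this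
  exact (sum_eq_zero_iff_of_nonpos fun _ hk => hS.apply_of_lt_pivot hrc (mem_Ioi.mp hk)).mp
    hsum0 i (mem_Ioi.mpr hi)

theorem eliminationMatrix_mul_apply_pivot_col_of_gt {i : Fin l} (hi : r < i) :
    (eliminationMatrix S r c * S) i c = 0 := by
  rcases eq_or_ne (S r c) 0 with hp | hp
  · rw [eliminationMatrix_of_eq_zero hp, Matrix.one_mul]
    exact apply_pivot_col_eq_zero_of_pivot_eq_zero hS hrc hsum hp hi
  · rw [eliminationMatrix_mul_apply_of_gt hp hi, div_mul_cancel₀ _ hp, sub_self]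

theorem eliminationMatrix_mul_apply_le {i : Fin l} (hi : r < i) {j : Fin t} (hj : j ≠ c) :
    (eliminationMatrix S r c * S) i j ≤ S i j := by
  rcases eq_or_ne (S r c) 0 with hp | hp
  · rw [eliminationMatrix_of_eq_zero hp, Matrix.one_mul]
  · rw [eliminationMatrix_mul_apply_of_gt hp hi, sub_le_self_iff]
    exact mul_nonneg_of_nonpos_of_nonpos
      (div_nonpos_of_nonpos_of_nonneg (hS.apply_of_lt_pivot hrc hi) (pivot_nonneg hS hrc hsum))
      (hS.apply_pivot_row hrc hj)

theorem OffDiagNonpos.eliminationMatrix_mul : OffDiagNonpos (eliminationMatrix S r c * S) := by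
  intro i j hij
  rcases lt_trichotomy i r with hi | rfl | hi
  · rw [eliminationMatrix_mul_apply_of_lt hi]
    exact hS i j hij
  · rcases eq_or_ne (S i c) 0 with hp | hp
    · rw [eliminationMatrix_of_eq_zero hp, Matrix.one_mul]
      exact hS i j hij
    · rw [eliminationMatrix_mul_apply_self_left hp]
      exact div_nonpos_of_nonpos_of_nonneg (hS i j hij) (pivot_nonneg hS hrc hsum)
  · rcases eq_or_ne j c with rfl | hj
    · rw [eliminationMatrix_mul_apply_pivot_col_of_gt hS hrc hsum hi]
    · exact (eliminationMatrix_mul_apply_le hS hrc hsum hi hj).trans (hS i j hij)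

theorem sum_Ioi_eliminationMatrix_mul_nonneg (j : Fin t) :
    0 ≤ ∑ i ∈ Ioi r, (eliminationMatrix S r c * S) i j := by
  rcases eq_or_ne j c with rfl | hj
  · exact sum_nonneg fun i hi =>
      (eliminationMatrix_mul_apply_pivot_col_of_gt hS hrc hsum (mem_Ioi.mp hi)).ge
  have hrj := hS.apply_pivot_row hrc hj
  have hsumj := hsum j
  rw [← add_sum_Ioi_eq_sum_Ici] at hsumj
  rcases eq_or_ne (S r c) 0 with hp | hp
  · rw [eliminationMatrix_of_eq_zero hp, Matrix.one_mul]
    linarith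
  -- the rows below `r` receive in total `-B / S r c ≤ 1` times row `r`
  set B := ∑ i ∈ Ioi r, S i c
  have hp : 0 < S r c := (pivot_nonneg hS hrc hsum).lt_of_ne' hp
  have hB : -(B / S r c) ≤ 1 := by
    rw [← neg_div, div_le_one hp]
    linarith [hsum c, add_sum_Ioi_eq_sum_Ici (f := fun i => S i c) r]
  calc 0 ≤ S r j + ∑ i ∈ Ioi r, S i j := hsumj
    _ = 1 * S r j + ∑ i ∈ Ioi r, S i j := by rw [one_mul]
    _ ≤ -(B / S r c) * S r j + ∑ i ∈ Ioi r, S i j := by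
      gcongr ?_ + _
      exact mul_le_mul_of_nonpos_right hB hrj
    _ = ∑ i ∈ Ioi r, (eliminationMatrix S r c * S) i j := by
      rw [sum_congr rfl fun i hi => eliminationMatrix_mul_apply_of_gt hp.ne' (mem_Ioi.mp hi) j,
        sum_sub_distrib, ← sum_mul, ← sum_div]
      ring

end ZMatrix

end Elimination

structure IsPartialElimination (T S : Matrix (Fin l) (Fin t) ℝ) (k : ℕ) : Prop where
  offDiagNonpos : OffDiagNonpos S
  sum_nonneg : ∀ j, 0 ≤ ∑ i : Fin l with k ≤ i.val, S i j
  eq_zero : ∀ (i : Fin l) (j : Fin t), (j : ℕ) < k → (j : ℕ) < i → S i j = 0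
  le : ∀ (i : Fin l) (j : Fin t), k ≤ (j : ℕ) → (j : ℕ) < i → S i j ≤ T i j
  diag : ∀ (i : Fin l) (j : Fin t), (i : ℕ) = j → (j : ℕ) < k → S i j = 0 ∨ S i j = 1
  diag_eq_one : ∀ (i i' : Fin l) (j : Fin t), (i : ℕ) = j → (j : ℕ) < k → (j : ℕ) < i' →
    T i' j < 0 → S i j = 1

namespace IsPartialElimination

variable {T S : Matrix (Fin l) (Fin t) ℝ}

theorem zero (hT : OffDiagNonpos T) (hcol : ∀ j, 0 ≤ ∑ i, T i j) :
    IsPartialElimination T T 0 where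
  offDiagNonpos := hT
  sum_nonneg j := by simpa using hcol j
  eq_zero _ _ h := absurd h (Nat.not_lt_zero _)
  le _ _ _ _ := le_rfl
  diag _ _ _ h := absurd h (Nat.not_lt_zero _)
  diag_eq_one _ _ _ _ h := absurd h (Nat.not_lt_zero _)

variable {r : Fin l} {c : Fin t}

theorem sum_Ici_nonneg (h : IsPartialElimination T S c) (hrc : (r : ℕ) = c) (j : Fin t) :
    0 ≤ ∑ i ∈ Ici r, S i j := by
  convert h.sum_nonneg j using 2
  ext i
  simp [Fin.le_def, hrc]

theorem eliminationMatrix_mul (h : IsPartialElimination T S c) (hrc : (r : ℕ) = c) :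
    IsPartialElimination T (eliminationMatrix S r c * S) (c + 1) := by
  have hsum := h.sum_Ici_nonneg hrc
  have hS := h.offDiagNonpos
  have hr : ∀ {i : Fin l}, (i : ℕ) = c → i = r := fun hi => Fin.ext (hi.trans hrc.symm)
  have hlt : ∀ {i : Fin l}, (i : ℕ) < c → i < r := fun hi => Fin.lt_def.mpr (hrc ▸ hi)
  have hgt : ∀ {i : Fin l}, (c : ℕ) < i → r < i := fun hi => Fin.lt_def.mpr (hrc ▸ hi)
  refine ⟨hS.eliminationMatrix_mul hrc hsum, fun j => ?_, fun i j hj hji => ?_,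
    fun i j hj hji => ?_, fun i j hij hj => ?_, fun i i' j hij hj hji' hT => ?_⟩
  · convert sum_Ioi_eliminationMatrix_mul_nonneg hS hrc hsum j using 2
    ext i
    simp [Fin.lt_def, hrc]
  · rcases Nat.lt_succ_iff_lt_or_eq.mp hj with hj | hj
    · exact eliminationMatrix_mul_apply_eq_zero (h.eq_zero r j hj (hrc ▸ hj))
        (h.eq_zero i j hj hji)
    · obtain rfl : j = c := Fin.ext hj
      exact eliminationMatrix_mul_apply_pivot_col_of_gt hS hrc hsum (hgt hji)
  · have hjc : j ≠ c := fun hjc => by rw [hjc] at hj; omega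
    exact (eliminationMatrix_mul_apply_le hS hrc hsum (hgt (by omega)) hjc).trans
      (h.le i j (by omega) hji)
  · rcases Nat.lt_succ_iff_lt_or_eq.mp hj with hj | hj
    · rw [eliminationMatrix_mul_apply_of_lt (hlt (hij ▸ hj))]
      exact h.diag i j hij hj
    · obtain rfl : j = c := Fin.ext hj
      obtain rfl := hr hij
      exact eliminationMatrix_mul_apply_pivot
  · rcases Nat.lt_succ_iff_lt_or_eq.mp hj with hj | hj
    · rw [eliminationMatrix_mul_apply_of_lt (hlt (hij ▸ hj))]
      exact h.diag_eq_one i i' j hij hj hji' hT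
    · obtain rfl : j = c := Fin.ext hj
      obtain rfl := hr hij
      refine eliminationMatrix_mul_apply_pivot_of_ne_zero fun hp => ?_
      have := apply_pivot_col_eq_zero_of_pivot_eq_zero hS hrc hsum hp (hgt hji')
      linarith [h.le i' j le_rfl hji']

end IsPartialElimination

theorem exists_nonneg_isPartialElimination {T : Matrix (Fin l) (Fin t) ℝ} (hT : OffDiagNonpos T)
    (hcol : ∀ j, 0 ≤ ∑ i, T i j) {k : ℕ} (hk : k ≤ min l t) :
    ∃ Y : Matrix (Fin l) (Fin l) ℝ, (∀ i j, 0 ≤ Y i j) ∧ IsPartialElimination T (Y * T) k := by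
  induction k with
  | zero => exact ⟨1, zero_le_one_elem, (Matrix.one_mul T).symm ▸ .zero hT hcol⟩
  | succ k ih =>
    obtain ⟨Y, hY, h⟩ := ih (by omega)
    let r : Fin l := ⟨k, by omega⟩
    let c : Fin t := ⟨k, by omega⟩
    have hE := eliminationMatrix_nonneg h.offDiagNonpos (r := r) (c := c) rfl
      (pivot_nonneg h.offDiagNonpos rfl (h.sum_Ici_nonneg (r := r) (c := c) rfl))
    refine ⟨eliminationMatrix (Y * T) r c * Y, fun i j => ?_, ?_⟩
    · rw [mul_apply]
      exact sum_nonneg fun m _ => mul_nonneg (hE i m) (hY m j)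
    · rw [Matrix.mul_assoc]
      exact h.eliminationMatrix_mul rfl

/-- Lemma (Gaussian elimination for `Z₊`-matrices): for an `ℓ × t` matrix `T` with all
off-diagonal entries nonpositive and all column sums nonnegative, Gaussian elimination
yields `T' = Y * T` where `Y` is entrywise nonnegative, `T'` is upper triangular with
diagonal entries `0` or `1` and nonpositive off-diagonal entries; moreover, if
`T i k < 0` for some `k < i`, then `T' k k = 1`. -/
theorem stmt_7 (l t : ℕ) (T : Matrix (Fin l) (Fin t) ℝ)
    (hoff : ∀ (i : Fin l) (j : Fin t), (i : ℕ) ≠ (j : ℕ) → T i j ≤ 0)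
    (hcol : ∀ j, 0 ≤ ∑ i, T i j) :
    ∃ (Y : Matrix (Fin l) (Fin l) ℝ) (T' : Matrix (Fin l) (Fin t) ℝ),
      T' = Y * T ∧
      (∀ i j, 0 ≤ Y i j) ∧
      (∀ (i : Fin l) (j : Fin t), (j : ℕ) < (i : ℕ) → T' i j = 0) ∧
      (∀ k (hk : k < l) (hk' : k < t),
        T' ⟨k, hk⟩ ⟨k, hk'⟩ = 0 ∨ T' ⟨k, hk⟩ ⟨k, hk'⟩ = 1) ∧
      (∀ (i : Fin l) (j : Fin t), (i : ℕ) ≠ (j : ℕ) → T' i j ≤ 0) ∧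
      (∀ (k : ℕ) (i : Fin l) (hk' : k < t), k < (i : ℕ) → T i ⟨k, hk'⟩ < 0 →
        ∀ hk : k < l, T' ⟨k, hk⟩ ⟨k, hk'⟩ = 1) := by
  obtain ⟨Y, hY, h⟩ := exists_nonneg_isPartialElimination hoff hcol le_rfl
  refine ⟨Y, Y * T, rfl, hY, fun i j hji => h.eq_zero i j ?_ hji,
    fun k hk hk' => h.diag _ _ rfl ?_, h.offDiagNonpos,
    fun k i hk' hki hT hk => h.diag_eq_one _ i _ rfl ?_ hki hT⟩
  · exact lt_min (hji.trans i.isLt) j.isLt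
  · exact lt_min hk hk'
  · exact lt_min hk hk'
end

section
/- Let T be an ℓ×t Z₊-matrix (off-diagonal entries nonpositive, column sums nonnegative) and let T^{(k)} denote the matrix after k steps of Gaussian elimination with nonnegative row operations as in the elimination procedure for Z₊-matrices. Then for every k and every column j ∈ [k+1, t], the partial column sum Σ_{i=k+1}^{ℓ} T^{(k)}_{ij} is nonnegative; i.e., the lower-right (ℓ-k)×(t-k) submatrix of T^{(k)} is again a Z₊-matrix. -/
/-!
A positive-pivot step replaces each row `i > k` by `T i - (T i k / T k k) • T k`. Off the
diagonal this subtracts the product of two nonpositive numbers from a nonpositive entry. In a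
column `j > k`, the Z₊-property at stage `k` gives `∑_{i>k} T i k ≥ -T k k`, so (as `T k j ≤ 0`)
the subtracted multiples of row `k` lower the partial column sum by at most `-T k j`, which the
slack `∑_{i>k} T i j ≥ -T k j` absorbs. Without a positive pivot the matrix is unchanged,
and dropping row `k` only removes a nonpositive entry from each later column.
-/

/-- One step of Gaussian elimination (0-indexed pivot position `(k,k)`): if the pivot
is positive, scale row `k` to make the pivot `1` and add the appropriate nonnegative
multiples of the (original) row `k` to the rows below to zero out column `k`;
otherwise do nothing. -/
noncomputable def elimStep {l t : ℕ} (k : ℕ) (T : Matrix (Fin l) (Fin t) ℝ) :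
    Matrix (Fin l) (Fin t) ℝ :=
  if h : k < l ∧ k < t then
    let pr : Fin l := ⟨k, h.1⟩
    let pc : Fin t := ⟨k, h.2⟩
    if 0 < T pr pc then
      fun i j =>
        if i = pr then T i j / T pr pc
        else if k < (i : ℕ) then T i j - T i pc / T pr pc * T pr j
        else T i j
    else T
  else T

/-- The matrix after `k` steps of Gaussian elimination. -/
noncomputable def elimIter {l t : ℕ} (T : Matrix (Fin l) (Fin t) ℝ) :
    ℕ → Matrix (Fin l) (Fin t) ℝ
  | 0 => T
  | k + 1 => elimStep k (elimIter T k)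

open Finset

section

variable {l t : ℕ}

/-- The lower-right submatrix `M[k:, k:]` is a Z₊-matrix. -/
def IsZPlusFrom (k : ℕ) (M : Matrix (Fin l) (Fin t) ℝ) : Prop :=
  ∀ j : Fin t, k ≤ (j : ℕ) →
    (0 ≤ ∑ i ∈ univ.filter (fun i : Fin l => k ≤ (i : ℕ)), M i j) ∧
    (∀ i : Fin l, k ≤ (i : ℕ) → (i : ℕ) ≠ (j : ℕ) → M i j ≤ 0)

lemma sum_filter_le_eq_add (k : ℕ) (hk : k < l) (f : Fin l → ℝ) :
    ∑ i ∈ univ.filter (fun i : Fin l => k ≤ (i : ℕ)), f i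
      = f ⟨k, hk⟩ + ∑ i ∈ univ.filter (fun i : Fin l => k + 1 ≤ (i : ℕ)), f i := by
  have hset : univ.filter (fun i : Fin l => k ≤ (i : ℕ))
      = insert ⟨k, hk⟩ (univ.filter (fun i : Fin l => k + 1 ≤ (i : ℕ))) := by
    ext i
    simp only [mem_filter, mem_univ, true_and, mem_insert, Fin.ext_iff]
    omega
  rw [hset, sum_insert (by simp)]

lemma elimStep_apply_of_pivot_pos {k : ℕ} {M : Matrix (Fin l) (Fin t) ℝ}
    (hl : k < l) (ht : k < t) (hp : 0 < M ⟨k, hl⟩ ⟨k, ht⟩) {i : Fin l} (hi : k < (i : ℕ))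
    (j : Fin t) :
    elimStep k M i j = M i j - M i ⟨k, ht⟩ / M ⟨k, hl⟩ ⟨k, ht⟩ * M ⟨k, hl⟩ j := by
  have hik : i ≠ ⟨k, hl⟩ := fun h => by simp [h] at hi
  rw [elimStep, dif_pos ⟨hl, ht⟩]
  exact (congrFun (congrFun (if_pos hp) i) j).trans ((if_neg hik).trans (if_pos hi))

lemma elimStep_eq_self {k : ℕ} {M : Matrix (Fin l) (Fin t) ℝ}
    (h : ¬ ∃ (hl : k < l) (ht : k < t), 0 < M ⟨k, hl⟩ ⟨k, ht⟩) : elimStep k M = M := by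
  by_cases hkl : k < l ∧ k < t
  · rw [elimStep, dif_pos hkl]
    exact if_neg fun hp => h ⟨hkl.1, hkl.2, hp⟩
  · rw [elimStep, dif_neg hkl]

lemma sub_div_mul_nonneg_of_pivot {p r A B : ℝ} (hp : 0 < p) (hr : r ≤ 0)
    (hA : 0 ≤ r + A) (hB : 0 ≤ p + B) : 0 ≤ A - B / p * r := by
  have hBp : -1 ≤ B / p := by rw [le_div_iff₀ hp]; linarith
  nlinarith

lemma isZPlusFrom_zero {M : Matrix (Fin l) (Fin t) ℝ}
    (hoff : ∀ (i : Fin l) (j : Fin t), (i : ℕ) ≠ (j : ℕ) → M i j ≤ 0)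
    (hcol : ∀ j, 0 ≤ ∑ i, M i j) : IsZPlusFrom 0 M :=
  fun j _ => ⟨by simpa using hcol j, fun i _ => hoff i j⟩

namespace IsZPlusFrom

variable {k : ℕ} {M : Matrix (Fin l) (Fin t) ℝ}

lemma succ (hM : IsZPlusFrom k M) : IsZPlusFrom (k + 1) M := by
  intro j hj
  obtain ⟨hsum, hoff⟩ := hM j (by omega)
  refine ⟨hsum.trans (sum_le_sum_of_subset_of_nonpos' ?_ ?_), fun i hi => hoff i (by omega)⟩
  · intro i
    simp only [mem_filter, mem_univ, true_and]
    omega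
  · simp only [mem_filter, mem_univ, true_and]
    exact fun i hi hi' => hoff i hi (by omega)

lemma elimStep_of_pivot_pos (hM : IsZPlusFrom k M) (hl : k < l) (ht : k < t)
    (hp : 0 < M ⟨k, hl⟩ ⟨k, ht⟩) : IsZPlusFrom (k + 1) (elimStep k M) := by
  intro j hj
  obtain ⟨hsum_j, hoff_j⟩ := hM j (by omega)
  obtain ⟨hsum_k, hoff_k⟩ := hM ⟨k, ht⟩ le_rfl
  have hstep := fun (i : Fin l) (hi : k + 1 ≤ (i : ℕ)) =>
    elimStep_apply_of_pivot_pos hl ht hp (i := i) (by omega) j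
  have hpivot_row : M ⟨k, hl⟩ j ≤ 0 := hoff_j _ le_rfl (by simp only; omega)
  constructor
  · rw [sum_congr rfl fun i hi => hstep i (mem_filter.mp hi).2, sum_sub_distrib,
      ← sum_mul, ← sum_div]
    rw [sum_filter_le_eq_add k hl] at hsum_j hsum_k
    exact sub_div_mul_nonneg_of_pivot hp hpivot_row hsum_j hsum_k
  · intro i hi hij
    rw [hstep i hi]
    have hcol_k : M i ⟨k, ht⟩ / M ⟨k, hl⟩ ⟨k, ht⟩ ≤ 0 :=
      div_nonpos_of_nonpos_of_nonneg (hoff_k i (by omega) (by simp only; omega)) hp.le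
    nlinarith [hoff_j i (by omega) hij]

lemma elimStep (hM : IsZPlusFrom k M) : IsZPlusFrom (k + 1) (elimStep k M) := by
  by_cases h : ∃ (hl : k < l) (ht : k < t), 0 < M ⟨k, hl⟩ ⟨k, ht⟩
  · obtain ⟨hl, ht, hp⟩ := h
    exact hM.elimStep_of_pivot_pos hl ht hp
  · rw [elimStep_eq_self h]
    exact hM.succ

end IsZPlusFrom

lemma isZPlusFrom_elimIter {T : Matrix (Fin l) (Fin t) ℝ} (hT : IsZPlusFrom 0 T) :
    ∀ k, IsZPlusFrom k (elimIter T k)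
  | 0 => hT
  | k + 1 => (isZPlusFrom_elimIter hT k).elimStep

end

/-- Gaussian elimination preserves the `Z₊`-property of the remaining submatrix:
after `k` elimination steps, for every column `j ≥ k` the partial column sum over the
rows `i ≥ k` is nonnegative, and all off-diagonal entries of the lower-right submatrix
are nonpositive. -/
theorem stmt_8 (l t : ℕ) (T : Matrix (Fin l) (Fin t) ℝ)
    (hoff : ∀ (i : Fin l) (j : Fin t), (i : ℕ) ≠ (j : ℕ) → T i j ≤ 0)
    (hcol : ∀ j, 0 ≤ ∑ i, T i j) :
    ∀ (k : ℕ) (j : Fin t), k ≤ (j : ℕ) →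
      (0 ≤ ∑ i ∈ Finset.univ.filter (fun i : Fin l => k ≤ (i : ℕ)),
        elimIter T k i j) ∧
      (∀ i : Fin l, k ≤ (i : ℕ) → (i : ℕ) ≠ (j : ℕ) → elimIter T k i j ≤ 0) :=
  isZPlusFrom_elimIter (isZPlusFrom_zero hoff hcol)
end

section
/- In the linear exchange market, let the bipartite graph (A ∪ G, F) have components and multipliers θ as in the component structure, and suppose the digraph (A, Ē) (with arc (i,j) iff u_{ij} > 0) is strongly connected. Then every nonzero nonnegative solution p̄ to the homogeneous system consisting of the MBB constraints u_{kj}·θ_{ρ(j')j'}·p̄_{ρ(j')} - u_{kj'}·θ_{ρ(j)j}·p̄_{ρ(j)} ≤ 0 (for (k,g_j) ∈ E∖F, (k,g_{j'}) ∈ F) together with Θ_i·p̄_i - Σ_{k ∈ C_i∩A} θ_{ρ(k)k}·p̄_{ρ(k)} ≤ 0 for all components i, is strictly positive in every coordinate. -/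
/-- Lemma (point-max (iii)): in a linear exchange market with strongly connected
utility digraph, every nonzero nonnegative solution of the homogeneous system
consisting of the MBB constraints and the component balance constraints is strictly
positive in every coordinate.

Setup: agents and goods are indexed by `Fin n`; `u i j ≥ 0` are utilities and
`E = {(i,j) : u i j > 0}`; `F ⊆ E` is the revealed edge set; `ρ ℓ ∈ Fin t` is the
index of the connected component (of the bipartite graph `(A ∪ G, F)`) containing good
`g ℓ`, every component containing a good (`ρ` surjective); `θ ℓ > 0` are the price
multipliers (`p ℓ = θ ℓ * p̄ (ρ ℓ)` when all edges of `F` are MBB), consistent on `F`;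
all `F`-neighbours of an agent lie in one component; `Θ i = Σ_{ρ ℓ = i} θ ℓ`; an agent
`k` belongs to `C i ∩ A` iff it has an `F`-edge into component `i`. -/
theorem stmt_9 (n t : ℕ)
    (u : Fin n → Fin n → ℝ) (hu : ∀ i j, 0 ≤ u i j)
    (F : Finset (Fin n × Fin n)) (hFE : ∀ e ∈ F, 0 < u e.1 e.2)
    (ρ : Fin n → Fin t) (hρ : Function.Surjective ρ)
    (θ : Fin n → ℝ) (hθ : ∀ ℓ, 0 < θ ℓ)
    -- all F-neighbours of an agent lie in the same component
    (hcomp : ∀ k j j' : Fin n, (k, j) ∈ F → (k, j') ∈ F → ρ j = ρ j')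
    -- consistency of the multipliers θ with the MBB equalities on F
    (hθF : ∀ k j j' : Fin n, (k, j) ∈ F → (k, j') ∈ F → u k j * θ j' = u k j' * θ j)
    -- strong connectivity of the digraph (A, Ē)
    (hsc : ∀ S : Set (Fin n), S.Nonempty → S ≠ Set.univ →
      ∃ k ∈ S, ∃ ℓ, ℓ ∉ S ∧ 0 < u k ℓ)
    (pbar : Fin t → ℝ) (hpnn : ∀ i, 0 ≤ pbar i) (hpne : pbar ≠ 0)
    -- homogeneous MBB constraints for (k,g_j) ∈ E \ F, (k,g_j') ∈ F
    (hmbb : ∀ k j j' : Fin n, 0 < u k j → (k, j) ∉ F → (k, j') ∈ F →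
      u k j * θ j' * pbar (ρ j') - u k j' * θ j * pbar (ρ j) ≤ 0)
    -- homogeneous component balance constraints
    (hbal : ∀ i : Fin t,
      (∑ ℓ ∈ Finset.univ.filter (fun ℓ : Fin n => ρ ℓ = i), θ ℓ) * pbar i -
        ∑ k ∈ Finset.univ.filter
            (fun k : Fin n => ∃ j : Fin n, (k, j) ∈ F ∧ ρ j = i),
          θ k * pbar (ρ k) ≤ 0) :
    ∀ i : Fin t, 0 < pbar i := by
  classical
  set v : Fin n → ℝ := fun k => θ k * pbar (ρ k) with hv
  have hvnn : ∀ k, 0 ≤ v k := fun k => mul_nonneg (hθ k).le (hpnn _)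
  set A : Fin t → Finset (Fin n) := fun i =>
    Finset.univ.filter (fun k : Fin n => ∃ j : Fin n, (k, j) ∈ F ∧ ρ j = i) with hA
  have hAmem : ∀ i k, k ∈ A i ↔ ∃ j : Fin n, (k, j) ∈ F ∧ ρ j = i := by
    intro i k; simp [hA]
  -- disjointness of the agent sets
  have hdis : ∀ i ∈ (Finset.univ : Finset (Fin t)), ∀ i' ∈ (Finset.univ : Finset (Fin t)),
      i ≠ i' → Disjoint (A i) (A i') := by
    intro i _ i' _ hne
    rw [Finset.disjoint_left]
    intro k hk hk'
    obtain ⟨j, hj, hji⟩ := (hAmem i k).1 hk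
    obtain ⟨j', hj', hji'⟩ := (hAmem i' k).1 hk'
    exact hne (hji ▸ hji' ▸ hcomp k j j' hj hj')
  set B : Finset (Fin n) := Finset.univ.biUnion A with hB
  set L : Fin t → ℝ := fun i =>
    (∑ ℓ ∈ Finset.univ.filter (fun ℓ : Fin n => ρ ℓ = i), θ ℓ) * pbar i with hL
  set T : Fin t → ℝ := fun i => ∑ k ∈ A i, v k with hT
  have hLT : ∀ i, L i ≤ T i := by
    intro i
    have h := hbal i
    simp only [hL, hT, hA, hv]
    linarith [h]
  -- total of the left-hand sides equals ∑ v
  have hsumL : ∑ i, L i = ∑ k, v k := by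
    simp only [hL, hv]
    rw [← Finset.sum_fiberwise (Finset.univ : Finset (Fin n)) ρ (fun k => θ k * pbar (ρ k))]
    refine Finset.sum_congr rfl fun i _ => ?_
    rw [Finset.sum_mul]
    refine Finset.sum_congr rfl fun ℓ hℓ => ?_
    rw [(Finset.mem_filter.1 hℓ).2]
  have hsumT : ∑ i, T i = ∑ k ∈ B, v k := (Finset.sum_biUnion hdis).symm
  have hBsub : B ⊆ Finset.univ := Finset.subset_univ B
  have hTle : ∑ i, T i ≤ ∑ k, v k := by
    rw [hsumT]
    exact Finset.sum_le_sum_of_subset_of_nonneg hBsub (fun k _ _ => hvnn k)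
  -- all balance constraints are tight
  have hzero : ∑ i, (T i - L i) = 0 := by
    rw [Finset.sum_sub_distrib]
    have h1 : ∑ i, L i ≤ ∑ i, T i := Finset.sum_le_sum fun i _ => hLT i
    linarith [hsumL ▸ hTle]
  have hEq : ∀ i, T i = L i := by
    intro i
    have := (Finset.sum_eq_zero_iff_of_nonneg
      (fun i _ => sub_nonneg.2 (hLT i))).1 hzero i (Finset.mem_univ i)
    linarith
  -- every agent with positive budget has an F-edge
  have hBfull : ∑ k ∈ B, v k = ∑ k, v k := by
    rw [← hsumT]
    have : ∑ i, T i = ∑ i, L i := Finset.sum_congr rfl fun i _ => hEq i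
    rw [this, hsumL]
  have hcov : ∀ k : Fin n, 0 < v k → ∃ j : Fin n, (k, j) ∈ F := by
    intro k hk
    by_contra hno
    push_neg at hno
    have hkB : k ∉ B := by
      simp only [hB, Finset.mem_biUnion]
      rintro ⟨i, -, hki⟩
      obtain ⟨j, hj, -⟩ := (hAmem i k).1 hki
      exact hno j hj
    have hsd : ∑ m ∈ Finset.univ \ B, v m = 0 := by
      have := Finset.sum_sdiff hBsub (f := v)
      linarith [hBfull]
    have := (Finset.sum_eq_zero_iff_of_nonneg
      (fun m _ => hvnn m)).1 hsd k (Finset.mem_sdiff.2 ⟨Finset.mem_univ k, hkB⟩)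
    linarith
  -- main argument
  intro i₀
  by_contra hneg
  have hp0 : pbar i₀ = 0 := le_antisymm (not_lt.1 hneg) (hpnn i₀)
  set S : Set (Fin n) := {m | 0 < pbar (ρ m)} with hS
  have hSne : S.Nonempty := by
    have : ∃ i, pbar i ≠ 0 := by
      by_contra h; push_neg at h; exact hpne (funext h)
    obtain ⟨i, hi⟩ := this
    obtain ⟨m, hm⟩ := hρ i
    exact ⟨m, by simp [hS, hm, lt_of_le_of_ne (hpnn i) (Ne.symm hi)]⟩
  have hSnu : S ≠ Set.univ := by
    obtain ⟨m, hm⟩ := hρ i₀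
    intro h
    have : m ∈ S := h ▸ Set.mem_univ m
    simp only [hS, Set.mem_setOf_eq, hm, hp0] at this
    exact lt_irrefl 0 this
  obtain ⟨k, hkS, ℓ, hℓS, hukℓ⟩ := hsc S hSne hSnu
  have hvk : 0 < v k := mul_pos (hθ k) hkS
  have hρℓ0 : pbar (ρ ℓ) = 0 := by
    have : ¬ 0 < pbar (ρ ℓ) := hℓS
    exact le_antisymm (not_lt.1 this) (hpnn _)
  obtain ⟨j', hj'⟩ := hcov k hvk
  set c : Fin t := ρ j' with hc
  have hpc0 : pbar c = 0 := by
    by_cases hkl : (k, ℓ) ∈ F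
    · rw [hc, hcomp k j' ℓ hj' hkl, hρℓ0]
    · have h := hmbb k ℓ j' hukℓ hkl hj'
      rw [hρℓ0] at h
      have h2 : u k ℓ * θ j' * pbar c ≤ 0 := by rw [hc]; linarith
      have hpos : 0 < u k ℓ * θ j' := mul_pos hukℓ (hθ j')
      nlinarith [hpnn c]
  -- component c: tight balance gives contradiction
  have hkc : k ∈ A c := (hAmem c k).2 ⟨j', hj', rfl⟩
  have hTc : v k ≤ T c := Finset.single_le_sum (fun m _ => hvnn m) hkc
  have hLc : L c = 0 := by rw [hL]; simp [hpc0]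
  rw [← hEq c] at hLc
  linarith
end

section
/- Let F ⊆ F* (the set of edges that are MBB in every market equilibrium) and let (p,f) be an F-allocation. If f_{kℓ} > ‖s(p,f)‖₁ for some edge (k,g_ℓ) ∈ E, then (k,g_ℓ) ∈ F*, i.e., (k,g_ℓ) is an MBB edge in every market equilibrium. -/
/-- `(i, g_j)` is a maximum bang-per-buck (MBB) edge at prices `p`. -/
def IsMBB {n : ℕ} (u : Fin n → Fin n → ℝ) (p : Fin n → ℝ) (i j : Fin n) : Prop :=
  0 < u i j ∧ ∀ k, u i k / p k ≤ u i j / p j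

/-- Market equilibrium: positive prices, nonnegative flow supported on MBB edges,
every agent spends her budget exactly, and every good is fully sold. -/
def IsEquilibrium {n : ℕ} (u : Fin n → Fin n → ℝ)
    (p : Fin n → ℝ) (f : Fin n → Fin n → ℝ) : Prop :=
  (∀ j, 0 < p j) ∧ (∀ i j, 0 ≤ f i j) ∧
  (∀ i j, f i j ≠ 0 → IsMBB u p i j) ∧
  (∀ i, ∑ j, f i j = p i) ∧ (∀ j, ∑ i, f i j = p j)

/-- `F*`: the set of edges that are MBB edges at every market equilibrium. -/
def FStar {n : ℕ} (u : Fin n → Fin n → ℝ) : Set (Fin n × Fin n) :=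
  {e | 0 < u e.1 e.2 ∧
    ∀ p f, IsEquilibrium u p f → IsMBB u p e.1 e.2}

/-- `F`-allocation: positive prices, flow nonnegative outside `F`, support and `F`
contained in the MBB edges, no agent overspends, and no good is oversold. -/
def IsFAlloc {n : ℕ} (u : Fin n → Fin n → ℝ) (F : Set (Fin n × Fin n))
    (p : Fin n → ℝ) (f : Fin n → Fin n → ℝ) : Prop :=
  (∀ j, 0 < p j) ∧ (∀ i j, (i, j) ∉ F → 0 ≤ f i j) ∧
  (∀ i j, f i j ≠ 0 → IsMBB u p i j) ∧
  (∀ e ∈ F, IsMBB u p e.1 e.2) ∧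
  (∀ i, ∑ j, f i j ≤ p i) ∧ (∀ j, ∑ i, f i j ≤ p j)

lemma ratio_le {n : ℕ} {u : Fin n → Fin n → ℝ} {p q : Fin n → ℝ}
    (hp : ∀ j, 0 < p j) (hq : ∀ j, 0 < q j) {i j j' : Fin n}
    (h1 : IsMBB u p i j) (h2 : IsMBB u q i j') :
    q j' * p j ≤ q j * p j' := by
  obtain ⟨hu1, hm1⟩ := h1
  obtain ⟨hu2, hm2⟩ := h2
  have a1 : u i j' * p j ≤ u i j * p j' :=
    (div_le_div_iff₀ (hp j') (hp j)).mp (hm1 j')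
  have a2 : u i j * q j' ≤ u i j' * q j :=
    (div_le_div_iff₀ (hq j) (hq j')).mp (hm2 j)
  nlinarith [mul_le_mul_of_nonneg_right a1 (le_of_lt (hq j')),
    mul_le_mul_of_nonneg_left a2 (le_of_lt (hp j')),
    (hp j).le, (hq j).le, hu1.le, hu2.le, mul_pos hu1 hu2,
    (hp j').le, (hq j').le]

lemma ratio_lt {n : ℕ} {u : Fin n → Fin n → ℝ} {p q : Fin n → ℝ}
    (hp : ∀ j, 0 < p j) (hq : ∀ j, 0 < q j) {i j j' : Fin n}
    (h1 : IsMBB u p i j) (h2 : IsMBB u q i j') (h3 : ¬ IsMBB u q i j) :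
    q j' * p j < q j * p j' := by
  obtain ⟨hu1, hm1⟩ := h1
  obtain ⟨hu2, hm2⟩ := h2
  have hex : ∃ m, u i j / q j < u i m / q m := by
    by_contra hc
    push_neg at hc
    exact h3 ⟨hu1, hc⟩
  obtain ⟨m, hm⟩ := hex
  have hstrict : u i j / q j < u i j' / q j' := lt_of_lt_of_le hm (hm2 m)
  have a1 : u i j' * p j ≤ u i j * p j' :=
    (div_le_div_iff₀ (hp j') (hp j)).mp (hm1 j')
  have a2 : u i j * q j' < u i j' * q j :=
    (div_lt_div_iff₀ (hq j) (hq j')).mp hstrict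
  nlinarith [mul_le_mul_of_nonneg_right a1 (le_of_lt (hq j')),
    mul_lt_mul_of_pos_left a2 (hp j'),
    (hp j).le, (hq j).le, hu1, hu2, mul_pos hu1 hu2,
    (hp j').le, (hq j').le]

/-- Lemma (revealed edges): if `F ⊆ F*`, `(p,f)` is an `F`-allocation, and
`f k ℓ > ‖s(p,f)‖₁` for an edge `(k, g_ℓ) ∈ E`, then `(k, g_ℓ) ∈ F*`. -/
theorem stmt_11 (n : ℕ) (u : Fin n → Fin n → ℝ) (hu : ∀ i j, 0 ≤ u i j)
    (hsc : ∀ S : Set (Fin n), S.Nonempty → S ≠ Set.univ →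
      ∃ k ∈ S, ∃ ℓ, ℓ ∉ S ∧ 0 < u k ℓ)
    (F : Set (Fin n × Fin n)) (hF : F ⊆ FStar u)
    (p : Fin n → ℝ) (f : Fin n → Fin n → ℝ) (hpf : IsFAlloc u F p f)
    (k ℓ : Fin n) (hE : 0 < u k ℓ)
    (hbig : (∑ j, (p j - ∑ i, f i j)) < f k ℓ) :
    (k, ℓ) ∈ FStar u := by
  classical
  obtain ⟨hp, hfF, hfM, hFM, hbud, hsold⟩ := hpf
  have hsnn : ∀ j, 0 ≤ p j - ∑ i, f i j := fun j => sub_nonneg.mpr (hsold j)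
  have hfkl : 0 < f k ℓ :=
    lt_of_le_of_lt (Finset.sum_nonneg fun j _ => hsnn j) hbig
  have hMBBkl : IsMBB u p k ℓ := hfM k ℓ (ne_of_gt hfkl)
  refine ⟨hE, ?_⟩
  intro q x heq
  by_contra hnot
  obtain ⟨hq, hx0, hxM, hxb, hxs⟩ := heq
  -- the superlevel set of goods and the corresponding agent set
  set S : Finset (Fin n) := Finset.univ.filter (fun j => q ℓ * p j ≤ q j * p ℓ) with hSdef
  set T : Finset (Fin n) := Finset.univ.filter (fun i => ∃ j ∈ S, IsMBB u q i j) with hTdef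
  have hmemS : ∀ j, j ∈ S ↔ q ℓ * p j ≤ q j * p ℓ := by
    intro j; simp [hSdef]
  have hmemT : ∀ i, i ∈ T ↔ ∃ j ∈ S, IsMBB u q i j := by
    intro i; simp [hTdef]
  have hlS : ℓ ∈ S := (hmemS ℓ).mpr le_rfl
  -- k is not in T
  have hkT : k ∉ T := by
    intro hk
    obtain ⟨j', hj'S, hj'M⟩ := (hmemT k).mp hk
    have h1 := ratio_lt hp hq hMBBkl hj'M hnot
    have h2 := (hmemS j').mp hj'S
    linarith
  -- agents in T have all their p-MBB edges inside S
  have hclose : ∀ i ∈ T, ∀ j, IsMBB u p i j → j ∈ S := by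
    intro i hi j hij
    obtain ⟨j', hj'S, hj'M⟩ := (hmemT i).mp hi
    have h1 := ratio_le hp hq hij hj'M
    have h2 := (hmemS j').mp hj'S
    refine (hmemS j).mpr ?_
    nlinarith [hp j', hq j', hp j, hq j, hp ℓ, hq ℓ,
      mul_le_mul_of_nonneg_right h1 (hp ℓ).le,
      mul_le_mul_of_nonneg_right h2 (hp j).le]
  -- f-support of agents in T is inside S
  have hfS : ∀ i ∈ T, ∀ j, j ∉ S → f i j = 0 := by
    intro i hi j hjS
    by_contra hne
    exact hjS (hclose i hi j (hfM i j hne))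
  -- f is nonnegative on rows outside T at goods in S
  have hfnn : ∀ i, i ∉ T → ∀ j ∈ S, 0 ≤ f i j := by
    intro i hiT j hjS
    by_cases hFmem : (i, j) ∈ F
    · exact absurd ((hmemT i).mpr ⟨j, hjS,
        (hF hFmem).2 q x ⟨hq, hx0, hxM, hxb, hxs⟩⟩) hiT
    · exact hfF i j hFmem
  -- equilibrium spending into S comes only from T
  have hxT : ∀ i j, j ∈ S → x i j ≠ 0 → i ∈ T := fun i j hjS hne =>
    (hmemT i).mpr ⟨j, hjS, hxM i j hne⟩
  -- Equilibrium inequality : ∑_{j ∈ S} q j ≤ ∑_{i ∈ T} q i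
  have hEq : ∑ j ∈ S, q j ≤ ∑ i ∈ T, q i := by
    have e1 : ∑ j ∈ S, q j = ∑ i, ∑ j ∈ S, x i j := by
      calc ∑ j ∈ S, q j = ∑ j ∈ S, ∑ i, x i j :=
            Finset.sum_congr rfl fun j _ => (hxs j).symm
        _ = ∑ i, ∑ j ∈ S, x i j := Finset.sum_comm
    have e2 : ∑ i, ∑ j ∈ S, x i j = ∑ i ∈ T, ∑ j ∈ S, x i j := by
      symm
      apply Finset.sum_subset (Finset.subset_univ T)
      intro i _ hiT
      apply Finset.sum_eq_zero
      intro j hj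
      by_contra hne
      exact hiT (hxT i j hj hne)
    have e3 : ∑ i ∈ T, ∑ j ∈ S, x i j ≤ ∑ i ∈ T, q i := by
      apply Finset.sum_le_sum
      intro i _
      rw [← hxb i]
      exact Finset.sum_le_sum_of_subset_of_nonneg (Finset.subset_univ S)
        (fun j _ _ => hx0 i j)
    rw [e1, e2]; exact e3
  -- F-allocation inequality : ∑_{i ∈ T} p i < ∑_{j ∈ S} p j
  have hFp : ∑ i ∈ T, p i < ∑ j ∈ S, p j := by
    have g1 : ∑ j ∈ S, ∑ i, f i j ≤ ∑ j ∈ S, p j :=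
      Finset.sum_le_sum fun j _ => hsold j
    have g2 : ∑ j ∈ S, ∑ i, f i j = ∑ i, ∑ j ∈ S, f i j := Finset.sum_comm
    have g3 : ∑ i ∈ T, (fun i => ∑ j ∈ S, f i j) i
        + ∑ i ∈ Tᶜ, (fun i => ∑ j ∈ S, f i j) i = ∑ i, ∑ j ∈ S, f i j :=
      Finset.sum_add_sum_compl T _
    have g4 : ∑ i ∈ T, ∑ j ∈ S, f i j = ∑ i ∈ T, ∑ j, f i j :=
      Finset.sum_congr rfl fun i hi =>
        Finset.sum_subset (Finset.subset_univ S) (fun j _ hj => hfS i hi j hj)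
    have g5 : f k ℓ ≤ ∑ i ∈ Tᶜ, ∑ j ∈ S, f i j := by
      have h1 : f k ℓ ≤ ∑ j ∈ S, f k j :=
        Finset.single_le_sum (fun j hj => hfnn k hkT j hj) hlS
      have h2 : ∑ j ∈ S, f k j ≤ ∑ i ∈ Tᶜ, ∑ j ∈ S, f i j :=
        Finset.single_le_sum
          (fun i hi => Finset.sum_nonneg fun j hj =>
            hfnn i (Finset.mem_compl.mp hi) j hj)
          (Finset.mem_compl.mpr hkT)
      linarith
    have g6 : ∑ i ∈ T, ∑ j, f i j
        = ∑ i ∈ T, p i - ∑ i ∈ T, (p i - ∑ j, f i j) := by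
      rw [Finset.sum_sub_distrib]; ring
    have g7 : ∑ i ∈ T, (p i - ∑ j, f i j) ≤ ∑ j, (p j - ∑ i, f i j) := by
      calc ∑ i ∈ T, (p i - ∑ j, f i j)
          ≤ ∑ i, (p i - ∑ j, f i j) :=
            Finset.sum_le_sum_of_subset_of_nonneg (Finset.subset_univ T)
              (fun i _ _ => sub_nonneg.mpr (hbud i))
        _ = ∑ j, (p j - ∑ i, f i j) := by
            rw [Finset.sum_sub_distrib, Finset.sum_sub_distrib, Finset.sum_comm]
    simp only at g3
    linarith
  -- split over S ∩ T and the differences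
  have hs1 : ∑ j ∈ S ∩ T, q j + ∑ j ∈ S \ T, q j = ∑ j ∈ S, q j :=
    Finset.sum_inter_add_sum_sdiff S T q
  have hs2 : ∑ i ∈ T ∩ S, q i + ∑ i ∈ T \ S, q i = ∑ i ∈ T, q i :=
    Finset.sum_inter_add_sum_sdiff T S q
  have hs3 : ∑ j ∈ S ∩ T, p j + ∑ j ∈ S \ T, p j = ∑ j ∈ S, p j :=
    Finset.sum_inter_add_sum_sdiff S T p
  have hs4 : ∑ i ∈ T ∩ S, p i + ∑ i ∈ T \ S, p i = ∑ i ∈ T, p i :=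
    Finset.sum_inter_add_sum_sdiff T S p
  have hcomm : T ∩ S = S ∩ T := Finset.inter_comm T S
  rw [hcomm] at hs2 hs4
  have hE' : ∑ j ∈ S \ T, q j ≤ ∑ i ∈ T \ S, q i := by linarith
  have hF' : ∑ i ∈ T \ S, p i < ∑ j ∈ S \ T, p j := by linarith
  -- ratio comparisons
  have r1 : q ℓ * ∑ j ∈ S \ T, p j ≤ p ℓ * ∑ j ∈ S \ T, q j := by
    rw [Finset.mul_sum, Finset.mul_sum]
    apply Finset.sum_le_sum
    intro j hj
    have hjS : j ∈ S := (Finset.mem_sdiff.mp hj).1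
    have h := (hmemS j).mp hjS
    calc q ℓ * p j ≤ q j * p ℓ := h
      _ = p ℓ * q j := mul_comm _ _
  have r2 : p ℓ * ∑ i ∈ T \ S, q i ≤ q ℓ * ∑ i ∈ T \ S, p i := by
    rw [Finset.mul_sum, Finset.mul_sum]
    apply Finset.sum_le_sum
    intro i hi
    have hiS : i ∉ S := (Finset.mem_sdiff.mp hi).2
    have h : q i * p ℓ < q ℓ * p i := lt_of_not_ge fun hle => hiS ((hmemS i).mpr hle)
    calc p ℓ * q i = q i * p ℓ := mul_comm _ _
      _ ≤ q ℓ * p i := h.le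
  have r3 : p ℓ * ∑ j ∈ S \ T, q j ≤ p ℓ * ∑ i ∈ T \ S, q i :=
    mul_le_mul_of_nonneg_left hE' (hp ℓ).le
  have rfinal : ∑ j ∈ S \ T, p j ≤ ∑ i ∈ T \ S, p i :=
    le_of_mul_le_mul_left (by linarith) (hq ℓ)
  linarith
end

section
/- Let (p,f) be an F-allocation such that φ(p,f) < Ψ(F)/(n(m+1)). Then there exists at least one edge (i,g_j) ∈ E∖F with f_{ij} > ‖s(p,f)‖₁ such that i and g_j lie in two different connected components of the undirected bipartite graph (A∪G, F). -/
/-- The potential `φ(p,f) = ‖s(p,f)‖_∞ / (Π_j p_j)^{1/n}`. -/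
noncomputable def phi {n : ℕ} (p : Fin n → ℝ) (f : Fin n → Fin n → ℝ) : ℝ :=
  sSup (Set.range fun j : Fin n => |p j - ∑ i, f i j|) /
    (∏ j, p j) ^ ((1 : ℝ) / n)

/-- `Ψ(F)`: the optimal potential over `F`-allocations supported on `F`. -/
noncomputable def Psi {n : ℕ} (u : Fin n → Fin n → ℝ)
    (F : Set (Fin n × Fin n)) : ℝ :=
  sInf {x : ℝ | ∃ p f, IsFAlloc u F p f ∧
    (∀ i j, f i j ≠ 0 → (i, j) ∈ F) ∧ x = phi p f}

/-- Adjacency of the undirected bipartite graph `(A ∪ G, F)`: agents are `Sum.inl`,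
goods are `Sum.inr`. -/
def bipAdj {n : ℕ} (F : Set (Fin n × Fin n)) (a b : Fin n ⊕ Fin n) : Prop :=
  (∃ i j, (i, j) ∈ F ∧ a = Sum.inl i ∧ b = Sum.inr j) ∨
  (∃ i j, (i, j) ∈ F ∧ a = Sum.inr j ∧ b = Sum.inl i)

open Finset Relation

section Flow

variable {n : ℕ}

-- Net outflow at each vertex when every edge is oriented from its agent to its good.
def flowBalance : (Fin n → Fin n → ℝ) →ₗ[ℝ] (Fin n ⊕ Fin n → ℝ) where
  toFun g := Sum.elim (fun i => ∑ j, g i j) (fun j => -∑ i, g i j)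
  map_add' g h := by ext (i | j) <;> simp [sum_add_distrib, add_comm]
  map_smul' c g := by ext (i | j) <;> simp [mul_sum]

@[simp] lemma flowBalance_inl (g : Fin n → Fin n → ℝ) (i : Fin n) :
    flowBalance g (Sum.inl i) = ∑ j, g i j := rfl

@[simp] lemma flowBalance_inr (g : Fin n → Fin n → ℝ) (j : Fin n) :
    flowBalance g (Sum.inr j) = -∑ i, g i j := rfl

def edgeFlow (a b : Fin n) (c : ℝ) : Fin n → Fin n → ℝ :=
  fun i j => if i = a ∧ j = b then c else 0

lemma edgeFlow_of_ne {a b i j : Fin n} (h : (i, j) ≠ (a, b)) (c : ℝ) :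
    edgeFlow a b c i j = 0 :=
  if_neg fun ⟨hi, hj⟩ => h (by rw [hi, hj])

lemma flowBalance_edgeFlow (a b : Fin n) (c : ℝ) :
    flowBalance (edgeFlow a b c) = c • (Pi.single (Sum.inl a) 1 - Pi.single (Sum.inr b) 1) := by
  ext (i | j) <;> simp [edgeFlow, Pi.single_apply, ite_and, sum_ite_irrel]

lemma sum_edgeFlow (h : Fin n → Fin n → ℝ) :
    ∑ e : Fin n × Fin n, edgeFlow e.1 e.2 (h e.1 e.2) = h := by
  ext a b
  simp [edgeFlow, Fintype.sum_prod_type, Finset.sum_apply, ite_and, sum_ite_irrel]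

lemma exists_flow_of_reflTransGen (F : Set (Fin n × Fin n)) (δ : ℝ)
    {x y : Fin n ⊕ Fin n} (h : ReflTransGen (bipAdj F) x y) :
    ∃ g : Fin n → Fin n → ℝ, (∀ i j, (i, j) ∉ F → g i j = 0) ∧
      flowBalance g = δ • (Pi.single x 1 - Pi.single y 1) := by
  induction h with
  | refl => exact ⟨0, fun _ _ _ => rfl, by simp⟩
  | tail _ hyz ih =>
    obtain ⟨g, hgF, hg⟩ := ih
    rcases hyz with ⟨a, b, hab, rfl, rfl⟩ | ⟨a, b, hab, rfl, rfl⟩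
    · refine ⟨g + edgeFlow a b δ, fun i j hij => ?_, ?_⟩
      · simp [hgF i j hij, edgeFlow_of_ne (ne_of_mem_of_not_mem hab hij).symm]
      · rw [map_add, hg, flowBalance_edgeFlow]; module
    · refine ⟨g - edgeFlow a b δ, fun i j hij => ?_, ?_⟩
      · simp [hgF i j hij, edgeFlow_of_ne (ne_of_mem_of_not_mem hab hij).symm]
      · rw [map_sub, hg, flowBalance_edgeFlow]; module

lemma exists_flow_flowBalance_eq (F : Set (Fin n × Fin n)) (h : Fin n → Fin n → ℝ)
    (hconn : ∀ i j, h i j ≠ 0 → ReflTransGen (bipAdj F) (Sum.inl i) (Sum.inr j)) :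
    ∃ g : Fin n → Fin n → ℝ, (∀ i j, (i, j) ∉ F → g i j = 0) ∧
      flowBalance g = flowBalance h := by
  have hedge : ∀ e : Fin n × Fin n, ∃ g : Fin n → Fin n → ℝ,
      (∀ i j, (i, j) ∉ F → g i j = 0) ∧
      flowBalance g = flowBalance (edgeFlow e.1 e.2 (h e.1 e.2)) := by
    rintro ⟨i, j⟩
    rw [flowBalance_edgeFlow]
    by_cases hij : h i j = 0
    · exact ⟨0, fun _ _ _ => rfl, by simp [hij]⟩
    · exact exists_flow_of_reflTransGen F _ (hconn i j hij)
  choose g hgF hg using hedge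
  refine ⟨∑ e, g e, fun i j hij => by simp [Finset.sum_apply, hgF _ i j hij], ?_⟩
  rw [map_sum, sum_congr rfl fun e _ => hg e, ← map_sum, sum_edgeFlow]

end Flow

section Market

variable {n : ℕ} {u : Fin n → Fin n → ℝ} {F : Set (Fin n × Fin n)} {p : Fin n → ℝ}
  {f g : Fin n → Fin n → ℝ}

lemma abs_surplus_le_sSup (p : Fin n → ℝ) (f : Fin n → Fin n → ℝ) (j : Fin n) :
    |p j - ∑ i, f i j| ≤ sSup (Set.range fun j => |p j - ∑ i, f i j|) :=
  le_csSup (Set.finite_range _).bddAbove ⟨j, rfl⟩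

lemma sum_surplus_le_mul_sSup (p : Fin n → ℝ) (f : Fin n → Fin n → ℝ) :
    ∑ j, (p j - ∑ i, f i j) ≤ n * sSup (Set.range fun j => |p j - ∑ i, f i j|) := by
  calc ∑ j, (p j - ∑ i, f i j)
      ≤ ∑ _j : Fin n, sSup (Set.range fun j => |p j - ∑ i, f i j|) :=
        sum_le_sum fun j _ => (le_abs_self _).trans (abs_surplus_le_sSup p f j)
    _ = n * sSup (Set.range fun j => |p j - ∑ i, f i j|) := by simp

lemma phi_nonneg (hp : ∀ j, 0 ≤ p j) (f : Fin n → Fin n → ℝ) : 0 ≤ phi p f :=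
  div_nonneg (Real.sSup_nonneg (by rintro _ ⟨j, rfl⟩; exact abs_nonneg _))
    (Real.rpow_nonneg (prod_nonneg fun j _ => hp j) _)

lemma phi_le_mul_phi (hp : ∀ j, 0 ≤ p j) {c : ℝ} (hc : 0 ≤ c)
    (h : ∀ j, |p j - ∑ i, g i j| ≤ c * sSup (Set.range fun j => |p j - ∑ i, f i j|)) :
    phi p g ≤ c * phi p f := by
  rw [phi, phi, mul_div_assoc']
  refine div_le_div_of_nonneg_right ?_ (Real.rpow_nonneg (prod_nonneg fun j _ => hp j) _)
  refine Real.sSup_le (by rintro _ ⟨j, rfl⟩; exact h j) (mul_nonneg hc ?_)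
  exact Real.sSup_nonneg (by rintro _ ⟨j, rfl⟩; exact abs_nonneg _)

lemma Psi_le_phi (hg : IsFAlloc u F p g) (hgF : ∀ i j, (i, j) ∉ F → g i j = 0) :
    Psi u F ≤ phi p g := by
  refine csInf_le ⟨0, ?_⟩ ⟨p, g, hg, fun i j h => by_contra fun hij => h (hgF i j hij), rfl⟩
  rintro _ ⟨p, f, hpf, -, rfl⟩
  exact phi_nonneg (fun j => (hpf.1 j).le) f

lemma card_filter_pos_le_card_edges (u : Fin n → Fin n → ℝ) (j : Fin n) :
    #{i | 0 < u i j} ≤ #{e : Fin n × Fin n | 0 < u e.1 e.2} :=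
  card_le_card_of_injOn (·, j) (by intro i; simp) (fun _ _ _ _ h => congrArg Prod.fst h)

open Classical in
noncomputable def truncFlow (F : Set (Fin n × Fin n)) (t : ℝ) (f : Fin n → Fin n → ℝ) :
    Fin n → Fin n → ℝ :=
  fun i j => if (i, j) ∈ F ∨ t < f i j then f i j else 0

lemma truncFlow_le (hf : IsFAlloc u F p f) (t : ℝ) (i j : Fin n) :
    truncFlow F t f i j ≤ f i j := by
  unfold truncFlow
  split_ifs with h
  · exact le_rfl
  · exact hf.2.1 i j (not_or.1 h).1

lemma sum_sub_truncFlow_le (hf : IsFAlloc u F p f) {t : ℝ} (ht : 0 ≤ t) (j : Fin n) :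
    ∑ i, (f i j - truncFlow F t f i j) ≤ #{i | 0 < u i j} * t := by
  have hdrop : ∀ i, f i j - truncFlow F t f i j ≤ if 0 < u i j then t else 0 := by
    intro i
    unfold truncFlow
    split_ifs with hkeep hu hu
    · exact (sub_self _).trans_le ht
    · simp
    · simpa using (not_or.1 hkeep).2
    · have hf0 : f i j = 0 := by_contra fun h0 => hu (hf.2.2.1 i j h0).1
      simp [hf0]
  calc ∑ i, (f i j - truncFlow F t f i j) ≤ ∑ i, if 0 < u i j then t else 0 :=
        sum_le_sum fun i _ => hdrop i
    _ = #{i | 0 < u i j} * t := by simp [sum_ite]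

lemma IsFAlloc.of_flowBalance_eq (hf : IsFAlloc u F p f) {h : Fin n → Fin n → ℝ}
    (hle : ∀ i j, h i j ≤ f i j) (hgF : ∀ i j, (i, j) ∉ F → g i j = 0)
    (hbal : flowBalance g = flowBalance h) : IsFAlloc u F p g := by
  obtain ⟨hp, -, -, hFmbb, hrow, hcol⟩ := hf
  refine ⟨hp, fun i j hij => (hgF i j hij).ge, fun i j hg0 => ?_, hFmbb, fun i => ?_, fun j => ?_⟩
  · exact hFmbb (i, j) (by_contra fun hij => hg0 (hgF i j hij))
  · calc ∑ j, g i j = ∑ j, h i j := congrFun hbal (Sum.inl i)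
      _ ≤ p i := (sum_le_sum fun j _ => hle i j).trans (hrow i)
  · calc ∑ i, g i j = ∑ i, h i j := neg_inj.1 (congrFun hbal (Sum.inr j))
      _ ≤ p j := (sum_le_sum fun i _ => hle i j).trans (hcol j)

lemma IsFAlloc.exists_supported_abs_surplus_le (hf : IsFAlloc u F p f) {t : ℝ} (ht : 0 ≤ t)
    (hconn : ∀ i j, (i, j) ∉ F → t < f i j → ReflTransGen (bipAdj F) (.inl i) (.inr j)) :
    ∃ g, IsFAlloc u F p g ∧ (∀ i j, (i, j) ∉ F → g i j = 0) ∧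
      ∀ j, |p j - ∑ i, g i j| ≤ (p j - ∑ i, f i j) + #{i | 0 < u i j} * t := by
  have htrunc_conn : ∀ i j, truncFlow F t f i j ≠ 0 →
      ReflTransGen (bipAdj F) (.inl i) (.inr j) := by
    intro i j h
    by_cases hij : (i, j) ∈ F
    · exact .single (.inl ⟨i, j, hij, rfl, rfl⟩)
    · refine hconn i j hij (by_contra fun hle => h ?_)
      simp [truncFlow, hij, hle]
  obtain ⟨g, hgF, hbal⟩ := exists_flow_flowBalance_eq F _ htrunc_conn
  have hg := hf.of_flowBalance_eq (truncFlow_le hf t) hgF hbal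
  refine ⟨g, hg, hgF, fun j => ?_⟩
  have hcol : ∑ i, g i j = ∑ i, truncFlow F t f i j := neg_inj.1 (congrFun hbal (Sum.inr j))
  rw [abs_of_nonneg (sub_nonneg.2 (hg.2.2.2.2.2 j)), hcol]
  have := sum_sub_truncFlow_le hf ht j
  rw [sum_sub_distrib] at this
  linarith

end Market

theorem stmt_13_general (n : ℕ) (u : Fin n → Fin n → ℝ)
    (F : Set (Fin n × Fin n))
    (m : ℕ)
    (hm : m = (Finset.univ.filter
      (fun e : Fin n × Fin n => 0 < u e.1 e.2)).card)
    (p : Fin n → ℝ) (f : Fin n → Fin n → ℝ) (hpf : IsFAlloc u F p f)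
    (hφ : phi p f < Psi u F / (n * (m + 1))) :
    ∃ i j : Fin n, 0 < u i j ∧ (i, j) ∉ F ∧
      (∑ j', (p j' - ∑ i', f i' j')) < f i j ∧
      ¬ Relation.ReflTransGen (bipAdj F) (Sum.inl i) (Sum.inr j) := by
  by_contra! hconn
  set S := ∑ j', (p j' - ∑ i', f i' j')
  set M := sSup (Set.range fun j => |p j - ∑ i, f i j|)
  have hp : ∀ j, 0 ≤ p j := fun j => (hpf.1 j).le
  have hS : 0 ≤ S := sum_nonneg fun j _ => sub_nonneg.2 (hpf.2.2.2.2.2 j)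
  obtain ⟨g, hg, hgF, hsurplus⟩ := hpf.exists_supported_abs_surplus_le hS fun i j hij hlt =>
    hconn i j (hpf.2.2.1 i j (hS.trans_lt hlt).ne').1 hij hlt
  have hPsi : 0 < Psi u F / (n * (m + 1)) := (phi_nonneg hp f).trans_lt hφ
  have hn : 0 < n := Nat.pos_of_ne_zero fun h => by simp [h] at hPsi
  have hphi : phi p g ≤ (1 + m * n) * phi p f := by
    refine phi_le_mul_phi hp (by positivity) fun j => ?_
    have hcard : (#{i | 0 < u i j} : ℝ) ≤ m := by
      rw [hm]; exact_mod_cast card_filter_pos_le_card_edges u j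
    calc |p j - ∑ i, g i j| ≤ (p j - ∑ i, f i j) + #{i | 0 < u i j} * S := hsurplus j
      _ ≤ M + m * (n * M) :=
        add_le_add ((le_abs_self _).trans (abs_surplus_le_sSup p f j))
          (mul_le_mul hcard (sum_surplus_le_mul_sSup p f) hS (Nat.cast_nonneg _))
      _ = (1 + m * n) * M := by ring
  have hmn : (1 + m * n : ℝ) ≤ n * (m + 1) := by
    have : (1 : ℝ) ≤ n := by exact_mod_cast hn
    nlinarith
  refine lt_irrefl (Psi u F) ?_
  calc Psi u F ≤ phi p g := Psi_le_phi hg hgF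
    _ ≤ (1 + m * n) * phi p f := hphi
    _ < (1 + m * n) * (Psi u F / (n * (m + 1))) := by gcongr
    _ ≤ n * (m + 1) * (Psi u F / (n * (m + 1))) := by gcongr
    _ = Psi u F := mul_div_cancel₀ _ (by positivity)

/-- Lemma (new edge): if `(p,f)` is an `F`-allocation with
`φ(p,f) < Ψ(F)/(n(m+1))`, then some edge `(i,g_j) ∈ E ∖ F` joining two different
connected components of `(A ∪ G, F)` carries flow `f i j > ‖s(p,f)‖₁`. -/
theorem stmt_13 (n : ℕ) (hn : 0 < n) (u : Fin n → Fin n → ℝ)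
    (hu : ∀ i j, 0 ≤ u i j)
    (F : Set (Fin n × Fin n)) (hFE : ∀ e ∈ F, 0 < u e.1 e.2)
    (m : ℕ)
    (hm : m = (Finset.univ.filter
      (fun e : Fin n × Fin n => 0 < u e.1 e.2)).card)
    (p : Fin n → ℝ) (f : Fin n → Fin n → ℝ) (hpf : IsFAlloc u F p f)
    (hφ : phi p f < Psi u F / (n * (m + 1))) :
    ∃ i j : Fin n, 0 < u i j ∧ (i, j) ∉ F ∧
      (∑ j', (p j' - ∑ i', f i' j')) < f i j ∧
      ¬ Relation.ReflTransGen (bipAdj F) (Sum.inl i) (Sum.inr j) :=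
  stmt_13_general n u F m hm p f hpf hφ
end

section
/- Let M ∈ R^{t×t} be a Z₊-matrix, i ∈ [t], and let D_i be the set of vertices reachable from i in the digraph on [t] with an arc (i,j) whenever M_{ij} < 0. Suppose q ∈ R^t satisfies q ≥ 0, q_i = 1, q_ℓ = 0 for ℓ ∉ D_i, and M_ℓ q = 0 for all ℓ ∈ D_i ∖ {i}. Then M_i q ≥ 0. -/
/-- For a `Z₊`-matrix `M` and the set `D_i` of vertices reachable from `i` in the
digraph with arc `(a,b)` iff `M a b < 0`: if `q ≥ 0`, `q i = 1`, `q` vanishes outside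
`D_i`, and `M_ℓ q = 0` for all `ℓ ∈ D_i ∖ {i}`, then `M_i q ≥ 0`. -/
theorem stmt_18 (t : ℕ) (M : Matrix (Fin t) (Fin t) ℝ)
    (hoff : ∀ i j, i ≠ j → M i j ≤ 0)
    (hcol : ∀ j, 0 ≤ ∑ i, M i j)
    (i : Fin t)
    (D : Set (Fin t))
    (hD : D = {ℓ | Relation.ReflTransGen (fun a b : Fin t => M a b < 0) i ℓ})
    (q : Fin t → ℝ) (hq : ∀ ℓ, 0 ≤ q ℓ) (hqi : q i = 1)
    (hqD : ∀ ℓ, ℓ ∉ D → q ℓ = 0)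
    (hMq : ∀ ℓ ∈ D, ℓ ≠ i → M.mulVec q ℓ = 0) :
    0 ≤ M.mulVec q i := by
  have hiD : i ∈ D := by rw [hD]; exact Relation.ReflTransGen.refl
  have hsum : 0 ≤ ∑ ℓ, M.mulVec q ℓ := by
    simp only [Matrix.mulVec, dotProduct]
    rw [Finset.sum_comm]
    refine Finset.sum_nonneg fun j _ => ?_
    rw [← Finset.sum_mul]
    exact mul_nonneg (hcol j) (hq j)
  have hrest : ∀ ℓ ∈ Finset.univ.erase i, M.mulVec q ℓ ≤ 0 := by
    intro ℓ hℓ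
    have hℓi : ℓ ≠ i := (Finset.mem_erase.mp hℓ).1
    by_cases hℓD : ℓ ∈ D
    · exact le_of_eq (hMq ℓ hℓD hℓi)
    · simp only [Matrix.mulVec, dotProduct]
      refine Finset.sum_nonpos fun j _ => ?_
      by_cases hjD : j ∈ D
      · have : ℓ ≠ j := fun h => hℓD (h ▸ hjD)
        exact mul_nonpos_of_nonpos_of_nonneg (hoff ℓ j this) (hq j)
      · rw [hqD j hjD, mul_zero]
  have := Finset.add_sum_erase Finset.univ (M.mulVec q) (Finset.mem_univ i)
  have h2 : ∑ ℓ ∈ Finset.univ.erase i, M.mulVec q ℓ ≤ 0 :=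
    Finset.sum_nonpos hrest
  linarith [this ▸ hsum]
end
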